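/- For any N ∈ ℕ (including 0) and all t ≥ 0, ∑_{n=1}^∞ sin(t/n²) ≥ −N + A₂(N)·t − B₂(N)·t³, where A₂(N) = π²/6 − ∑_{n=1}^N n^{-2} and B₂(N) = (1/6)(π⁶/945 − ∑_{n=1}^N n^{-6}). -/

import Mathlib

open Real

/-!
Split the series after its first `N` terms. Each of those terms is at least `-1`. In the tail,
`sin ξ ≥ ξ - ξ³/6` for `ξ = t/n² ≥ 0` bounds the sum below by `t ∑_{n>N} n⁻² - (t³/6) ∑_{n>N} n⁻⁶`,
and the two tails are `A₂(N)` and `6 B₂(N)` by Euler's values `ζ(2) = π²/6` and `ζ(6) = π⁶/945`.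
-/

theorem bernoulli'_six : bernoulli' 6 = 1 / 42 := by
  have h5 : bernoulli' 5 = 0 := bernoulli'_eq_zero_of_odd (by decide) (by norm_num)
  have h62 : Nat.choose 6 2 = 15 := by decide
  have h63 : Nat.choose 6 3 = 20 := by decide
  have h64 : Nat.choose 6 4 = 15 := by decide
  rw [bernoulli'_def]
  norm_num [Finset.sum_range_succ, h5, h62, h63, h64]

theorem hasSum_zeta_six : HasSum (fun n : ℕ => (1 : ℝ) / (n : ℝ) ^ 6) (π ^ 6 / 945) := by
  convert! hasSum_zeta_nat three_ne_zero using 1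
  rw [bernoulli_eq_bernoulli'_of_ne_one (by decide), bernoulli'_six]
  norm_num [Nat.factorial]
  ring

theorem hasSum_one_div_succ_pow {k : ℕ} (hk : k ≠ 0) {s : ℝ}
    (h : HasSum (fun n : ℕ => 1 / (n : ℝ) ^ k) s) :
    HasSum (fun n : ℕ => 1 / ((n : ℝ) + 1) ^ k) s := by
  simpa [hk] using (hasSum_nat_add_iff' 1).2 h

theorem Summable.sin {ι : Type*} {f : ι → ℝ} (hf : Summable f) :
    Summable fun i => Real.sin (f i) :=
  .of_norm_bounded hf.abs fun _ => abs_sin_le_abs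

theorem mul_one_div_sq_sub_le_sin {t : ℝ} (ht : 0 ≤ t) (x : ℝ) :
    t * (1 / x ^ 2) - t ^ 3 / 6 * (1 / x ^ 6) ≤ Real.sin (t / x ^ 2) := by
  convert sin_ge_sub_cube (div_nonneg ht (sq_nonneg x)) using 1
  ring

theorem neg_add_le_tsum_of_le_of_hasSum {f g : ℕ → ℝ} {c : ℝ} (N : ℕ) (hf : Summable f)
    (hf_ge : ∀ n, -1 ≤ f n) (hg : HasSum g c) (hgf : ∀ n, g n ≤ f (n + N)) :
    -(N : ℝ) + c ≤ ∑' n, f n := by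
  rw [← hf.sum_add_tsum_nat_add N]
  have head : -(N : ℝ) ≤ ∑ i ∈ Finset.range N, f i := by
    simpa using Finset.sum_le_sum fun i (_ : i ∈ Finset.range N) => hf_ge i
  have tail : c ≤ ∑' i, f (i + N) :=
    hasSum_le hgf hg ((summable_nat_add_iff N).2 hf).hasSum
  linarith

/-- For any `N : ℕ` and `t ≥ 0`,
`S₂(t) ≥ −N + A₂(N)·t − B₂(N)·t³` with
`A₂(N) = π²/6 − ∑_{n=1}^N n^{-2}`, `B₂(N) = (1/6)(π⁶/945 − ∑_{n=1}^N n^{-6})`. -/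
theorem stmt_19 (N : ℕ) (t : ℝ) (ht : 0 ≤ t) :
    (∑' n : ℕ, Real.sin (t / ((n : ℝ) + 1) ^ 2))
      ≥ -(N : ℝ)
        + (π ^ 2 / 6 - ∑ n ∈ Finset.range N, 1 / ((n : ℝ) + 1) ^ 2) * t
        - (1 / 6) * (π ^ 6 / 945 - ∑ n ∈ Finset.range N, 1 / ((n : ℝ) + 1) ^ 6) * t ^ 3 := by
  have zeta2 := hasSum_one_div_succ_pow two_ne_zero hasSum_zeta_two
  have zeta6 := hasSum_one_div_succ_pow (by norm_num) hasSum_zeta_six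
  have tails := ((hasSum_nat_add_iff' N).2 zeta2).mul_left t |>.sub
    (((hasSum_nat_add_iff' N).2 zeta6).mul_left (t ^ 3 / 6))
  have summable_sin : Summable fun n : ℕ => Real.sin (t / ((n : ℝ) + 1) ^ 2) := by
    simpa only [mul_one_div] using (zeta2.summable.mul_left t).sin
  convert neg_add_le_tsum_of_le_of_hasSum N summable_sin (fun _ => neg_one_le_sin _) tails
    (fun n => mul_one_div_sq_sub_le_sin ht _) using 1
  ring
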